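/- Let Z be a uniformly discrete space of bounded geometry and c a uniformly bounded 0-chain on Z with integer coefficients. Then [c] = 0 in H₀^{uf}(Z; ℤ) if and only if there exist C, r > 0 such that for all finite S ⊆ Z, |Σ_{z∈S} c(z)| ≤ C·|∂_r(S)|. -/

import Mathlib

/-- The closed `r`-neighborhood of a set `A`. -/
def nbhd {Z : Type*} [MetricSpace Z] (r : ℝ) (A : Set Z) : Set Z :=
  {z | ∃ a ∈ A, dist z a ≤ r}

/-- The `r`-boundary of `A`: points outside `A` within distance `r` of `A`. -/
def bdry {Z : Type*} [MetricSpace Z] (r : ℝ) (A : Set Z) : Set Z :=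
  nbhd r A \ A

/-- Uniformly discrete metric space. -/
def UniformlyDiscrete (Z : Type*) [MetricSpace Z] : Prop :=
  ∃ r > (0 : ℝ), ∀ x y : Z, dist x y < r → x = y

/-- Bounded geometry: balls of radius `r` have at most `N_r` points. -/
def BoundedGeometry (Z : Type*) [MetricSpace Z] : Prop :=
  ∀ r : ℝ, ∃ N : ℕ, ∀ x : Z, {y : Z | dist y x ≤ r}.Finite ∧
    {y : Z | dist y x ≤ r}.ncard ≤ N

/-- A uniformly finite 1-chain with coefficients in a normed ring `R`:
coefficients on ordered pairs (edges), uniformly bounded, supported on edges of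
uniformly bounded length, and locally finite at each vertex. -/
def IsUFOneChain {Z : Type*} [MetricSpace Z] {R : Type*} [NormedRing R]
    (b : Z → Z → R) : Prop :=
  (∃ M : ℝ, ∀ z w : Z, ‖b z w‖ ≤ M) ∧
  (∃ l : ℝ, ∀ z w : Z, b z w ≠ 0 → dist z w ≤ l) ∧
  (∀ z : Z, {w : Z | b z w ≠ 0 ∨ b w z ≠ 0}.Finite)

/-- The boundary of a 1-chain at a vertex `z`: net flow into `z`. -/
noncomputable def ufBoundaryAt {Z : Type*} [MetricSpace Z] {R : Type*} [NormedRing R]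
    (b : Z → Z → R) (z : Z) : R :=
  (∑ᶠ w : Z, b w z) - ∑ᶠ w : Z, b z w

/-- A 0-chain `c` represents `0` in `H₀^{uf}(Z; R)` iff it is the boundary of a
uniformly finite 1-chain. -/
def UFBoundsZero {Z : Type*} [MetricSpace Z] {R : Type*} [NormedRing R]
    (c : Z → R) : Prop :=
  ∃ b : Z → Z → R, IsUFOneChain b ∧ ∀ z : Z, c z = ufBoundaryAt b z

/-!
If `c = ∂b`, the sum of `c` over `S` is the net flow of `b` through the edges leaving `S`. These
edges have length at most `r`, so they end in `∂_r S`, and by bounded geometry each point of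
`∂_r S` meets boundedly many of them, each of bounded weight.

Conversely, write `c = a - n` with `a, n ≥ D ≥ C` and think of `a z` and `n z` as two kinds of
tokens sitting at `z`. Since the `D` tokens of either kind at each point of `∂_r S` pay for the
boundary term, the isoperimetric inequality is Hall's condition for an injection of `a`-tokens
into `n`-tokens moving each token by at most `r`, and likewise in the other direction.
Schröder–Bernstein along the relation "within distance `r`" turns the two injections into a
bijection, and counting the tokens it moves from `w` to `z` gives a uniformly finite 1-chain with
boundary `a - n = c`.
-/

section

open Finset Function

variable {ι : Type*}

theorem ncard_setOf_fst_eq (a : ι → ℕ) (z : ι) :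
    {p : Σ w, Fin (a w) | p.1 = z}.ncard = a z := by
  have : {p : Σ w, Fin (a w) | p.1 = z} = Set.range (Sigma.mk z) := by
    ext ⟨w, i⟩
    constructor
    · rintro rfl
      exact ⟨i, rfl⟩
    · rintro ⟨j, hj⟩
      exact (congrArg Sigma.fst hj).symm
  rw [this, Set.ncard_range_of_injective sigma_mk_injective, Nat.card_eq_fintype_card,
    Fintype.card_fin]

theorem finite_setOf_fst_mem (a : ι → ℕ) {A : Set ι} (hA : A.Finite) :
    {p : Σ w, Fin (a w) | p.1 ∈ A}.Finite :=
  hA.preimage' fun z _ => (Set.finite_range (Sigma.mk z)).subset fun p hp => by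
    obtain ⟨w, i⟩ := p
    obtain rfl : w = z := hp
    exact ⟨i, rfl⟩

theorem finsum_ncard_sep_eq {α β M : Type*} [AddCommMonoidWithOne M] {P : Set α}
    (hP : P.Finite) (g : α → β) : ∑ᶠ w, (({p ∈ P | g p = w}.ncard : ℕ) : M) = P.ncard := by
  classical
  rw [finsum_eq_sum_of_support_subset (s := hP.toFinset.image g), Set.ncard_eq_toFinset_card P hP,
    card_eq_sum_card_image g, Nat.cast_sum]
  · refine sum_congr rfl fun w _ => ?_
    rw [← Set.ncard_coe_finset]
    congr 2
    ext p
    simp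
  · intro w hw
    obtain ⟨p, hp, rfl⟩ : {p ∈ P | g p = w}.Nonempty :=
      Set.nonempty_of_ncard_ne_zero fun h => hw (by simp only [h, Nat.cast_zero])
    simpa using ⟨p, hp, rfl⟩

end

section

open Finset Function

variable {Z : Type*} [MetricSpace Z]

theorem BoundedGeometry.finite_ball (hbg : BoundedGeometry Z) (r : ℝ) (x : Z) :
    {y : Z | dist y x ≤ r}.Finite :=
  let ⟨_, hN⟩ := hbg r
  (hN x).1

theorem BoundedGeometry.finite_nbhd (hbg : BoundedGeometry Z) (r : ℝ) {A : Set Z}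
    (hA : A.Finite) : (nbhd r A).Finite := by
  have : nbhd r A = ⋃ a ∈ A, {z | dist z a ≤ r} := by
    ext z
    simp [nbhd]
  rw [this]
  exact hA.biUnion fun a _ => hbg.finite_ball r a

theorem subset_nbhd {r : ℝ} (hr : 0 ≤ r) (A : Set Z) : A ⊆ nbhd r A :=
  fun z hz => ⟨z, hz, by simpa using hr⟩

theorem sum_ufBoundaryAt_eq_sum_sdiff [DecidableEq Z] {R : Type*} [NormedRing R]
    (b : Z → Z → R) {S T : Finset Z} (hST : S ⊆ T)
    (hT : ∀ z ∈ S, ∀ w, b z w ≠ 0 ∨ b w z ≠ 0 → w ∈ T) :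
    ∑ z ∈ S, ufBoundaryAt b z = ∑ w ∈ T \ S, ∑ z ∈ S, (b w z - b z w) := by
  have hrow : ∀ z ∈ S, ufBoundaryAt b z = ∑ w ∈ T, (b w z - b z w) := by
    intro z hz
    rw [ufBoundaryAt, sum_sub_distrib,
      finsum_eq_sum_of_support_subset _ fun w hw => hT z hz w (Or.inr hw),
      finsum_eq_sum_of_support_subset _ fun w hw => hT z hz w (Or.inl hw)]
  -- the flow between two points of `S` cancels
  have hinner : ∑ w ∈ S, ∑ z ∈ S, (b w z - b z w) = 0 := by
    simp only [sum_sub_distrib]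
    exact sub_eq_zero.2 sum_comm
  rw [sum_congr rfl hrow, sum_comm, ← sum_sdiff hST, hinner, add_zero]

theorem norm_sum_sub_swap_le {R : Type*} [NormedRing R] {b : Z → Z → R} {M r : ℝ} {N : ℕ}
    (hM : ∀ z w, ‖b z w‖ ≤ M) (hr : ∀ z w, b z w ≠ 0 → dist z w ≤ r)
    (hN : ∀ x : Z, {y | dist y x ≤ r}.Finite ∧ {y | dist y x ≤ r}.ncard ≤ N)
    (S : Finset Z) (w : Z) : ‖∑ z ∈ S, (b w z - b z w)‖ ≤ 2 * M * N := by
  classical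
  have hM0 : 0 ≤ M := (norm_nonneg _).trans (hM w w)
  have hnear : ∑ z ∈ S with dist z w ≤ r, (b w z - b z w) = ∑ z ∈ S, (b w z - b z w) := by
    refine sum_filter_of_ne fun z _ hz => ?_
    by_cases hwz : b w z = 0
    · exact hr z w fun h => hz (by rw [hwz, h, sub_zero])
    · exact dist_comm z w ▸ hr w z hwz
  have hcard : (#{z ∈ S | dist z w ≤ r} : ℝ) ≤ N := by
    have hsub : (↑{z ∈ S | dist z w ≤ r} : Set Z) ⊆ {y | dist y w ≤ r} := fun z hz =>
      (mem_filter.1 hz).2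
    have := (Set.ncard_le_ncard hsub (hN w).1).trans (hN w).2
    rw [Set.ncard_coe_finset] at this
    exact_mod_cast this
  calc ‖∑ z ∈ S, (b w z - b z w)‖
      = ‖∑ z ∈ S with dist z w ≤ r, (b w z - b z w)‖ := by rw [hnear]
    _ ≤ ∑ z ∈ S with dist z w ≤ r, ‖b w z - b z w‖ := norm_sum_le _ _
    _ ≤ #{z ∈ S | dist z w ≤ r} • (2 * M) := sum_le_card_nsmul _ _ _ fun z _ =>
        (norm_sub_le _ _).trans (by linarith [hM w z, hM z w])
    _ ≤ 2 * M * N := by rw [nsmul_eq_mul]; nlinarith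

theorem UFBoundsZero.norm_sum_le_mul_ncard_bdry (hbg : BoundedGeometry Z) {R : Type*}
    [NormedRing R] {c : Z → R} (h : UFBoundsZero c) :
    ∃ C r : ℝ, 0 < C ∧ 0 < r ∧ ∀ S : Finset Z,
      ‖∑ z ∈ S, c z‖ ≤ C * ((bdry r (S : Set Z)).ncard : ℝ) := by
  classical
  obtain ⟨b, ⟨⟨M, hM⟩, ⟨l, hl⟩, -⟩, hcb⟩ := h
  set r := max l 1
  have hlr : ∀ z w, b z w ≠ 0 → dist z w ≤ r := fun z w h => (hl z w h).trans (le_max_left _ _)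
  obtain ⟨N, hN⟩ := hbg r
  refine ⟨2 * |M| * N + 1, r, by positivity, lt_max_of_lt_right one_pos, fun S => ?_⟩
  have hnbhd := hbg.finite_nbhd r S.finite_toSet
  set T := hnbhd.toFinset
  have hST : S ⊆ T := fun z hz =>
    hnbhd.mem_toFinset.2 (subset_nbhd (zero_le_one.trans (le_max_right _ _)) _ hz)
  have hT : ∀ z ∈ S, ∀ w, b z w ≠ 0 ∨ b w z ≠ 0 → w ∈ T := by
    rintro z hz w (h | h)
    · exact hnbhd.mem_toFinset.2 ⟨z, hz, dist_comm w z ▸ hlr z w h⟩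
    · exact hnbhd.mem_toFinset.2 ⟨z, hz, hlr w z h⟩
  have hbdry : (bdry r (S : Set Z)).ncard = #(T \ S) := by
    rw [← Set.ncard_coe_finset, coe_sdiff, hnbhd.coe_toFinset, bdry]
  calc ‖∑ z ∈ S, c z‖ = ‖∑ w ∈ T \ S, ∑ z ∈ S, (b w z - b z w)‖ := by
        rw [sum_congr rfl fun z _ => hcb z, sum_ufBoundaryAt_eq_sum_sdiff b hST hT]
    _ ≤ ∑ w ∈ T \ S, ‖∑ z ∈ S, (b w z - b z w)‖ := norm_sum_le _ _
    _ ≤ #(T \ S) • (2 * |M| * N) := sum_le_card_nsmul _ _ _ fun w _ =>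
        norm_sum_sub_swap_le (fun z w => (hM z w).trans (le_abs_self M)) hlr hN S w
    _ ≤ (2 * |M| * N + 1) * ((bdry r (S : Set Z)).ncard : ℝ) := by
        rw [nsmul_eq_mul, hbdry]
        nlinarith [abs_nonneg M]

theorem BoundedGeometry.exists_injective_dist_le (hbg : BoundedGeometry Z) {r : ℝ} (a n : Z → ℕ)
    (hall : ∀ S : Finset Z, ∑ z ∈ S, a z ≤ ∑ᶠ w ∈ nbhd r (S : Set Z), n w) :
    ∃ f : (Σ z, Fin (a z)) → Σ w, Fin (n w), Injective f ∧ ∀ p, dist (f p).1 p.1 ≤ r := by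
  classical
  have hnear : ∀ p : Σ z, Fin (a z), {q : Σ w, Fin (n w) | q.1 ∈ {w | dist w p.1 ≤ r}}.Finite :=
    fun p => finite_setOf_fst_mem n (hbg.finite_ball r p.1)
  have hcard : ∀ s : Finset (Σ z, Fin (a z)), #s ≤ #(s.biUnion fun p => (hnear p).toFinset) := by
    intro s
    set S := s.image Sigma.fst
    have hnbhd := hbg.finite_nbhd r S.finite_toSet
    calc #s ≤ #(S.sigma fun _ => univ) := card_le_card fun p hp =>
          mem_sigma.2 ⟨mem_image_of_mem _ hp, mem_univ _⟩
      _ = ∑ z ∈ S, a z := by simp [card_sigma]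
      _ ≤ ∑ᶠ w ∈ nbhd r (S : Set Z), n w := hall S
      _ = #(hnbhd.toFinset.sigma fun _ => univ) := by
          rw [finsum_mem_eq_finite_toFinset_sum _ hnbhd]
          simp [card_sigma]
      _ ≤ #(s.biUnion fun p => (hnear p).toFinset) := card_le_card fun q hq => by
          obtain ⟨z, hz, hqz⟩ := hnbhd.mem_toFinset.1 (mem_sigma.1 hq).1
          obtain ⟨p, hp, rfl⟩ := mem_image.1 hz
          exact mem_biUnion.2 ⟨p, hp, (hnear p).mem_toFinset.2 hqz⟩
  obtain ⟨f, hf, hfnear⟩ := (all_card_le_biUnion_card_iff_exists_injective _).1 hcard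
  exact ⟨f, hf, fun p => (hnear p).mem_toFinset.1 (hfnear p)⟩

theorem sum_le_finsum_nbhd_of_le_add_ncard_bdry (hbg : BoundedGeometry Z) {r : ℝ} (hr : 0 ≤ r)
    {a n : Z → ℕ} {D : ℕ} (hD : ∀ z, D ≤ n z) {S : Finset Z}
    (hS : ∑ z ∈ S, a z ≤ ∑ z ∈ S, n z + D * (bdry r (S : Set Z)).ncard) :
    ∑ z ∈ S, a z ≤ ∑ᶠ w ∈ nbhd r (S : Set Z), n w := by
  have hbdry : (bdry r (S : Set Z)).Finite := (hbg.finite_nbhd r S.finite_toSet).sdiff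
  have hpay : D * (bdry r (S : Set Z)).ncard ≤ ∑ᶠ w ∈ bdry r (S : Set Z), n w := by
    rw [finsum_mem_eq_finite_toFinset_sum _ hbdry, Set.ncard_eq_toFinset_card _ hbdry, mul_comm,
      ← smul_eq_mul]
    exact card_nsmul_le_sum _ _ _ fun w _ => hD w
  rw [← Set.union_sdiff_cancel (subset_nbhd hr (S : Set Z)),
    finsum_mem_union Set.disjoint_sdiff_right S.finite_toSet hbdry, finsum_mem_coe_finset]
  exact hS.trans (Nat.add_le_add_left hpay _)

theorem ufBoundsZero_natCast_sub_of_bijective (hbg : BoundedGeometry Z) {a n : Z → ℕ} {K : ℕ}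
    (ha : ∀ z, a z ≤ K) {r : ℝ} {h : (Σ z, Fin (a z)) → Σ w, Fin (n w)} (hh : Bijective h)
    (hr : ∀ p, dist (h p).1 p.1 ≤ r) : UFBoundsZero fun z => (a z : ℤ) - n z := by
  -- `b z w` counts the tokens that `h` moves from `w` to `z`.
  set b : Z → Z → ℤ := fun z w => ({p | p.1 = w ∧ (h p).1 = z}.ncard : ℤ)
  have hsrc : ∀ z, {p : Σ z, Fin (a z) | p.1 = z}.Finite := fun z =>
    finite_setOf_fst_mem a (Set.finite_singleton z)
  have hlen : ∀ z w, b z w ≠ 0 → dist z w ≤ r := by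
    intro z w hzw
    obtain ⟨p, rfl, rfl⟩ : {p | p.1 = w ∧ (h p).1 = z}.Nonempty :=
      Set.nonempty_of_ncard_ne_zero fun h0 => hzw (by simp only [b, h0, Nat.cast_zero])
    exact hr p
  refine ⟨b, ⟨⟨K, fun z w => ?_⟩, ⟨r, hlen⟩, fun z => ?_⟩, fun z => ?_⟩
  · have hle : {p | p.1 = w ∧ (h p).1 = z}.ncard ≤ K :=
      (Set.ncard_le_ncard (fun p hp => hp.1) (hsrc w)).trans
        ((ncard_setOf_fst_eq a w).trans_le (ha w))
    simp only [b, Int.norm_natCast, Nat.cast_le]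
    exact_mod_cast hle
  · refine (hbg.finite_ball r z).subset ?_
    rintro w (hw | hw)
    · exact (dist_comm w z).trans_le (hlen z w hw)
    · exact hlen w z hw
  · have hout : ∑ᶠ w, b w z = a z := by
      exact (finsum_ncard_sep_eq (hsrc z) fun p => (h p).1).trans (by rw [ncard_setOf_fst_eq])
    have hin : ∑ᶠ w, b z w = n z := by
      have hdst : {p | (h p).1 = z}.Finite :=
        (finite_setOf_fst_mem n (Set.finite_singleton z)).preimage hh.1.injOn
      have hcard : {p | (h p).1 = z}.ncard = n z := by
        rw [← ncard_setOf_fst_eq n z]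
        exact Set.ncard_preimage_of_injective_subset_range (s := {q | q.1 = z}) hh.1
          (hh.2.range_eq ▸ Set.subset_univ _)
      rw [← hcard, ← finsum_ncard_sep_eq hdst Sigma.fst]
      refine finsum_congr fun w => ?_
      simp only [b]
      congr 2
      ext p
      exact and_comm
    rw [ufBoundaryAt, hout, hin]

theorem ufBoundsZero_of_abs_sum_le_mul_ncard_bdry (hbg : BoundedGeometry Z) {c : Z → ℤ}
    (hc : ∃ K : ℤ, ∀ z, |c z| ≤ K) {C r : ℝ} (hr : 0 < r)
    (hS : ∀ S : Finset Z, (|∑ z ∈ S, c z| : ℝ) ≤ C * ((bdry r (S : Set Z)).ncard : ℝ)) :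
    UFBoundsZero c := by
  obtain ⟨K, hK⟩ := hc
  set D := ⌈C⌉₊
  have hD : ∀ S : Finset Z, |∑ z ∈ S, c z| ≤ D * (bdry r (S : Set Z)).ncard := fun S => by
    exact_mod_cast (hS S).trans (mul_le_mul_of_nonneg_right (Nat.le_ceil C) (Nat.cast_nonneg _))
  set a : Z → ℕ := fun z => (c z).toNat + D
  set n : Z → ℕ := fun z => (-c z).toNat + D
  have hcan : ∀ z, c z = a z - n z := fun z => by
    simp only [a, n, Nat.cast_add]
    rw [add_sub_add_right_eq_sub, Int.toNat_sub_toNat_neg]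
  have hcond : ∀ S : Finset Z, ∑ z ∈ S, a z ≤ ∑ z ∈ S, n z + D * (bdry r (S : Set Z)).ncard ∧
      ∑ z ∈ S, n z ≤ ∑ z ∈ S, a z + D * (bdry r (S : Set Z)).ncard := by
    intro S
    have hsum : ∑ z ∈ S, (a z : ℤ) = ∑ z ∈ S, (n z : ℤ) + ∑ z ∈ S, c z := by
      rw [← sum_add_distrib]
      exact sum_congr rfl fun z _ => by rw [hcan z, add_sub_cancel]
    have := abs_le.1 (hD S)
    constructor <;> zify <;> linarith
  obtain ⟨f, hf, hfr⟩ := hbg.exists_injective_dist_le a n fun S =>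
    sum_le_finsum_nbhd_of_le_add_ncard_bdry hbg hr.le (fun z => Nat.le_add_left D _) (hcond S).1
  obtain ⟨g, hg, hgr⟩ := hbg.exists_injective_dist_le n a fun S =>
    sum_le_finsum_nbhd_of_le_add_ncard_bdry hbg hr.le (fun z => Nat.le_add_left D _) (hcond S).2
  obtain ⟨h, hh, hhr⟩ := Embedding.schroeder_bernstein_of_rel hf hg
    (fun p q => dist q.1 p.1 ≤ r) hfr fun q => (dist_comm _ _).trans_le (hgr q)
  have ha : ∀ z, a z ≤ K.toNat + D := fun z => by
    have := (abs_le.1 (hK z)).2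
    simp only [a]
    omega
  convert ufBoundsZero_natCast_sub_of_bijective hbg ha hh hhr
  exact hcan _

end

theorem stmt11_general {Z : Type*} [MetricSpace Z]
    (hbg : BoundedGeometry Z)
    (c : Z → ℤ) (hc : ∃ K : ℤ, ∀ z, |c z| ≤ K) :
    UFBoundsZero c ↔ ∃ C r : ℝ, 0 < C ∧ 0 < r ∧ ∀ S : Finset Z,
      (|∑ z ∈ S, c z| : ℝ) ≤ C * ((bdry r (S : Set Z)).ncard : ℝ) := by
  constructor
  · intro h
    obtain ⟨C, r, hC, hr, hS⟩ := h.norm_sum_le_mul_ncard_bdry hbg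
    refine ⟨C, r, hC, hr, fun S => ?_⟩
    simpa only [Int.norm_eq_abs, Int.cast_sum] using hS S
  · rintro ⟨C, r, -, hr, hS⟩
    exact ufBoundsZero_of_abs_sum_le_mul_ncard_bdry hbg hc hr hS

/-- Theorem C: a uniformly bounded integer 0-chain `c` vanishes in `H₀^{uf}(Z; ℤ)`
iff there are `C, r > 0` with `|Σ_S c| ≤ C·|∂_r S|` for all finite `S ⊆ Z`. -/
theorem stmt11 {Z : Type*} [MetricSpace Z]
    (hud : UniformlyDiscrete Z) (hbg : BoundedGeometry Z)
    (c : Z → ℤ) (hc : ∃ K : ℤ, ∀ z, |c z| ≤ K) :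
    UFBoundsZero c ↔ ∃ C r : ℝ, 0 < C ∧ 0 < r ∧ ∀ S : Finset Z,
      (|∑ z ∈ S, c z| : ℝ) ≤ C * ((bdry r (S : Set Z)).ncard : ℝ) :=
  stmt11_general hbg c hc
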